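/- arXiv:2602.04001 — 3 statements merged into one kernel-verified Lean document; each statement's English description precedes it below -/
import Mathlib

section
/- Let α > 0, A > 0, B ∈ (0, A), D ≥ 2A/(1+√8), and define γ(ξ) := A - B·e^{-αξ} for ξ ≥ 0. Then γ > 0 and γ' ≥ 0 on [0,∞), and D·(γ(ξ)+D)·γ''(ξ) + 2·γ(ξ)·γ'(ξ)² ≤ 0 for all ξ ≥ 0. -/
/-
Writing `u = B e^{-αξ} ∈ (0, B]`, one has `γ = A - u > 0`, `γ' = αu ≥ 0` and `γ'' = -α²u`, so the
inequality reads `α²u (2(A - u)u - D(A - u + D)) ≤ 0`. The bracket is a concave quadratic in `u`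
whose maximum `((2A + D)² - 8D(A + D)) / 8 = -(D(1 + √8) - 2A)(D(√8 - 1) + 2A) / 8` is nonpositive
since `D ≥ 2A/(1 + √8)`.
-/

open Real

lemma hasDerivAt_mul_exp_neg_mul (c α x : ℝ) :
    HasDerivAt (fun x => c * exp (-(α * x))) (-(α * c) * exp (-(α * x))) x := by
  have h : HasDerivAt (fun x => -(α * x)) (-α) x := by
    simpa using ((hasDerivAt_id x).const_mul α).fun_neg
  exact (h.exp.const_mul c).congr_deriv (by ring)

lemma deriv_sub_mul_exp_neg_mul (A B α : ℝ) :
    deriv (fun x => A - B * exp (-(α * x))) = fun x => α * B * exp (-(α * x)) := by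
  funext x
  convert ((hasDerivAt_mul_exp_neg_mul B α x).const_sub A).deriv using 1
  ring

lemma deriv_deriv_sub_mul_exp_neg_mul (A B α x : ℝ) :
    deriv (deriv (fun x => A - B * exp (-(α * x)))) x = -(α ^ 2 * (B * exp (-(α * x)))) := by
  rw [deriv_sub_mul_exp_neg_mul, (hasDerivAt_mul_exp_neg_mul (α * B) α x).deriv]
  ring

lemma two_mul_sub_mul_self_le {A D : ℝ} (hA : 0 ≤ A) (hD : 2 * A ≤ D * (1 + √8)) (u : ℝ) :
    2 * (A - u) * u ≤ D * (A - u + D) := by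
  have hs : √8 ^ 2 = 8 := sq_sqrt (by norm_num)
  have hs1 : 1 < √8 := by nlinarith [sqrt_nonneg 8]
  have hD0 : 0 ≤ D := by nlinarith
  have hdisc : 0 ≤ 7 * D ^ 2 + 4 * A * D - 4 * A ^ 2 := by
    have h := mul_nonneg (sub_nonneg.2 hD) (by nlinarith : 0 ≤ D * (√8 - 1) + 2 * A)
    linear_combination h + D ^ 2 * hs
  nlinarith [sq_nonneg (4 * u - (2 * A + D))]

theorem stmt4_general (α A B D : ℝ) (hα : 0 < α) (hB : 0 < B) (hBA : B < A)
    (hD : 2 * A / (1 + Real.sqrt 8) ≤ D) :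
    ∀ ξ ∈ Set.Ici (0:ℝ),
      0 < A - B * Real.exp (-(α * ξ))
      ∧ 0 ≤ deriv (fun x => A - B * Real.exp (-(α * x))) ξ
      ∧ D * ((A - B * Real.exp (-(α * ξ))) + D)
            * deriv (deriv (fun x => A - B * Real.exp (-(α * x)))) ξ
          + 2 * (A - B * Real.exp (-(α * ξ)))
            * (deriv (fun x => A - B * Real.exp (-(α * x))) ξ) ^ 2 ≤ 0 := by
  intro ξ hξ
  rw [deriv_deriv_sub_mul_exp_neg_mul, deriv_sub_mul_exp_neg_mul]
  set u := B * exp (-(α * ξ))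
  have hu : 0 < u := by positivity
  have huB : u ≤ B :=
    mul_le_of_le_one_right hB.le (exp_le_one_iff.2 (by nlinarith [Set.mem_Ici.1 hξ]))
  have hD' : 2 * A ≤ D * (1 + √8) := (div_le_iff₀ (by positivity)).1 hD
  have key := two_mul_sub_mul_self_le (by linarith) hD' u
  refine ⟨by linarith, by positivity, ?_⟩
  have hαu : 0 ≤ α ^ 2 * u := by positivity
  nlinarith [mul_le_mul_of_nonneg_left key hαu]

theorem stmt4 (α A B D : ℝ) (hα : 0 < α) (hA : 0 < A) (hB : 0 < B) (hBA : B < A)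
    (hD : 2 * A / (1 + Real.sqrt 8) ≤ D) :
    ∀ ξ ∈ Set.Ici (0:ℝ),
      0 < A - B * Real.exp (-(α * ξ))
      ∧ 0 ≤ deriv (fun x => A - B * Real.exp (-(α * x))) ξ
      ∧ D * ((A - B * Real.exp (-(α * ξ))) + D)
            * deriv (deriv (fun x => A - B * Real.exp (-(α * x)))) ξ
          + 2 * (A - B * Real.exp (-(α * ξ)))
            * (deriv (fun x => A - B * Real.exp (-(α * x))) ξ) ^ 2 ≤ 0 :=
  stmt4_general α A B D hα hB hBA hD
end

section
/- Let Ω ⊂ ℝ be an open bounded interval and α ∈ (0,1), p ∈ [1,∞). Then for every α-Hölder continuous φ : Ω̄ → ℝ, one has ‖φ‖_{L^∞(Ω)} ≤ ((pα+1)/(pα)^{pα/(pα+1)}) · [φ]_α^{1/(pα+1)} · ‖φ‖_{L^p(Ω)}^{pα/(pα+1)} + ((pα+1)/(pα·|Ω|^{1/p})) · ‖φ‖_{L^p(Ω)}, where [φ]_α denotes the α-Hölder seminorm of φ on Ω̄. -/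
/-!
Averaging `|φ|^p` over a window of length `r ≤ b - a` around `x` yields a point `y` with
`|φ y| ≤ ‖φ‖_p r^(-1/p)`, while `|φ x - φ y| ≤ [φ]_α r^α`; so
`|φ x| ≤ ‖φ‖_p r^(-1/p) + [φ]_α r^α` for every `r ∈ (0, b - a]`. The right-hand side is
minimised on `(0, ∞)` at `r* = (‖φ‖_p / (pα [φ]_α))^(p/(pα+1))`, where it equals the first
term of the bound; if `r* > b - a`, the choice `r = b - a` gives at most the second term.
-/

open Set MeasureTheory Filter Topology

section HolderQuotients

variable {s : Set ℝ} {α : ℝ} {φ : ℝ → ℝ}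

def holderQuotients (s : Set ℝ) (α : ℝ) (φ : ℝ → ℝ) : Set ℝ :=
  {r | ∃ x ∈ s, ∃ y ∈ s, x ≠ y ∧ r = |φ x - φ y| / |x - y| ^ α}

lemma sSup_holderQuotients_nonneg : 0 ≤ sSup (holderQuotients s α φ) :=
  Real.sSup_nonneg fun _ ⟨_, _, _, _, _, hr⟩ => hr ▸ by positivity

lemma abs_sub_le_sSup_holderQuotients_mul (hα : 0 < α)
    (hbdd : BddAbove (holderQuotients s α φ)) {x y : ℝ} (hx : x ∈ s) (hy : y ∈ s) :
    |φ x - φ y| ≤ sSup (holderQuotients s α φ) * |x - y| ^ α := by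
  rcases eq_or_ne x y with rfl | hxy
  · simp [Real.zero_rpow hα.ne']
  · have hpos : 0 < |x - y| ^ α := by
      have := abs_pos.2 (sub_ne_zero.2 hxy)
      positivity
    rw [← div_le_iff₀ hpos]
    exact le_csSup hbdd ⟨x, hx, y, hy, hxy, rfl⟩

end HolderQuotients

section LocalEstimate

variable {a b p : ℝ} {φ : ℝ → ℝ}

lemma exists_Icc_window {x r : ℝ} (hx : x ∈ Icc a b) (hr : 0 ≤ r) (hrD : r ≤ b - a) :
    ∃ c, a ≤ c ∧ c + r ≤ b ∧ x ∈ Icc c (c + r) := by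
  refine ⟨min x (b - r), le_min hx.1 (by linarith), ?_, min_le_left _ _, ?_⟩
  · linarith [min_le_right x (b - r)]
  · rcases le_total x (b - r) with h | h
    · rw [min_eq_left h]; linarith
    · rw [min_eq_right h]; linarith [hx.2]

lemma exists_abs_le_integral_rpow_mul_rpow_neg (hφ : ContinuousOn φ (Icc a b)) (hp : 0 < p)
    {c r : ℝ} (hac : a ≤ c) (hcb : c + r ≤ b) (hr : 0 < r) :
    ∃ y ∈ Icc c (c + r), |φ y| ≤ (∫ z in a..b, |φ z| ^ p) ^ (1 / p) * r ^ (-(1 / p)) := by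
  have hcr : c ≤ c + r := by linarith
  have hg : ContinuousOn (fun z => |φ z| ^ p) (Icc a b) :=
    hφ.abs.rpow_const fun _ _ => Or.inr hp.le
  obtain ⟨y, hy, hmean⟩ := exists_eq_interval_average (by linarith : c ≠ c + r)
    (by rw [uIcc_of_le hcr]; exact hg.mono (Icc_subset_Icc hac hcb))
  rw [interval_average_eq_div, add_sub_cancel_left] at hmean
  have hy : y ∈ Icc c (c + r) := by
    rw [uIoo_of_le hcr] at hy
    exact Ioo_subset_Icc_self hy
  have hwindow : ∫ z in c..c + r, |φ z| ^ p ≤ ∫ z in a..b, |φ z| ^ p :=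
    intervalIntegral.integral_mono_interval hac hcr hcb
      (Eventually.of_forall fun _ => by positivity)
      (by rw [← uIcc_of_le (hac.trans (hcr.trans hcb))] at hg; exact hg.intervalIntegrable)
  have hX : 0 ≤ ∫ z in a..b, |φ z| ^ p :=
    intervalIntegral.integral_nonneg (hac.trans (hcr.trans hcb)) fun _ _ => by positivity
  refine ⟨y, hy, ?_⟩
  rw [Real.rpow_neg hr.le, ← Real.inv_rpow hr.le, ← Real.mul_rpow hX (inv_nonneg.2 hr.le),
    one_div, Real.le_rpow_inv_iff_of_pos (abs_nonneg _) (by positivity) hp, ← div_eq_mul_inv,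
    hmean]
  gcongr

theorem abs_le_integral_rpow_mul_rpow_neg_add_mul_rpow {α M : ℝ}
    (hφ : ContinuousOn φ (Icc a b)) (hp : 0 < p) (hα : 0 ≤ α) (hM : 0 ≤ M)
    (hholder : ∀ u ∈ Icc a b, ∀ v ∈ Icc a b, |φ u - φ v| ≤ M * |u - v| ^ α)
    {x r : ℝ} (hx : x ∈ Icc a b) (hr : 0 < r) (hrD : r ≤ b - a) :
    |φ x| ≤ (∫ z in a..b, |φ z| ^ p) ^ (1 / p) * r ^ (-(1 / p)) + M * r ^ α := by
  obtain ⟨c, hac, hcb, hxc⟩ := exists_Icc_window hx hr.le hrD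
  obtain ⟨y, hyc, hφy⟩ := exists_abs_le_integral_rpow_mul_rpow_neg hφ hp hac hcb hr
  have hy : y ∈ Icc a b := Icc_subset_Icc hac hcb hyc
  have hxy : |x - y| ≤ r :=
    abs_sub_le_iff.2 ⟨by linarith [hxc.2, hyc.1], by linarith [hxc.1, hyc.2]⟩
  calc |φ x| ≤ |φ y| + |φ x - φ y| := by linarith [abs_sub_abs_le_abs_sub (φ x) (φ y)]
    _ ≤ (∫ z in a..b, |φ z| ^ p) ^ (1 / p) * r ^ (-(1 / p)) + M * |x - y| ^ α :=
      add_le_add hφy (hholder x hx y hy)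
    _ ≤ _ := by gcongr

end LocalEstimate

section Optimisation

variable {p α L M D : ℝ}

lemma nonpos_of_forall_le_mul_rpow {A : ℝ} (hα : 0 < α) (hD : 0 < D)
    (h : ∀ r, 0 < r → r ≤ D → A ≤ M * r ^ α) : A ≤ 0 := by
  have hlim : Tendsto (fun r : ℝ => M * r ^ α) (𝓝[>] 0) (𝓝 0) := by
    have := ((Real.continuousAt_rpow_const 0 α (Or.inr hα.le)).tendsto.const_mul M).mono_left
      (nhdsWithin_le_nhds (s := Ioi 0))
    simpa [Real.zero_rpow hα.ne'] using this
  refine ge_of_tendsto hlim ?_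
  filter_upwards [Ioc_mem_nhdsGT hD] with r hr using h r hr.1 hr.2

/-- The minimiser of `r ↦ L r^(-1/p) + M r^α` on `(0, ∞)`. -/
noncomputable def optimalRadius (p α L M : ℝ) : ℝ := (L / (p * α * M)) ^ (p / (p * α + 1))

lemma optimalRadius_pos (hL : 0 < L) (hM : 0 < M) (hp : 0 < p) (hα : 0 < α) :
    0 < optimalRadius p α L M := by
  unfold optimalRadius; positivity

lemma optimalRadius_le (hp : 0 < p) (hα : 0 < α) (hD : 0 < D) (hL : 0 < L) (hM : 0 < M)
    (h : L < p * α * M * D ^ ((p * α + 1) / p)) : optimalRadius p α L M ≤ D := by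
  have hkM : 0 < p * α * M := by positivity
  calc optimalRadius p α L M ≤ (D ^ ((p * α + 1) / p)) ^ (p / (p * α + 1)) := by
        unfold optimalRadius
        gcongr
        rw [div_le_iff₀ hkM]; linarith
    _ = D := by
        rw [← Real.rpow_mul hD.le, div_mul_div_cancel₀ (by positivity), div_self (by positivity),
          Real.rpow_one]

lemma mul_rpow_neg_add_mul_rpow_optimalRadius (hp : 0 < p) (hα : 0 < α) (hL : 0 < L)
    (hM : 0 < M) :
    L * optimalRadius p α L M ^ (-(1 / p)) + M * optimalRadius p α L M ^ α
      = (p * α + 1) / (p * α) ^ (p * α / (p * α + 1)) * M ^ (1 / (p * α + 1))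
          * L ^ (p * α / (p * α + 1)) := by
  set k := p * α with hk
  have hk0 : 0 < k := by positivity
  have hsu : k / (k + 1) = 1 - 1 / (k + 1) := by field_simp; ring
  set t := L / (k * M)
  have ht : 0 < t := by positivity
  have e1 : optimalRadius p α L M ^ (-(1 / p)) = t ^ (-(1 / (k + 1))) := by
    rw [optimalRadius, ← Real.rpow_mul ht.le, hk]
    field_simp
  have e2 : optimalRadius p α L M ^ α = t ^ (k / (k + 1)) := by
    rw [optimalRadius, ← Real.rpow_mul ht.le, hk]
    field_simp
  rw [e1, e2, Real.rpow_neg ht.le, Real.div_rpow hL.le (by positivity),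
    Real.div_rpow hL.le (by positivity), Real.mul_rpow hk0.le hM.le,
    Real.mul_rpow hk0.le hM.le, hsu, Real.rpow_sub hL, Real.rpow_sub hk0, Real.rpow_sub hM,
    Real.rpow_one, Real.rpow_one, Real.rpow_one]
  field_simp

lemma mul_rpow_neg_add_mul_rpow_le_of_le (hp : 0 < p) (hα : 0 < α) (hD : 0 < D)
    (h : p * α * M * D ^ ((p * α + 1) / p) ≤ L) :
    L * D ^ (-(1 / p)) + M * D ^ α ≤ (p * α + 1) / (p * α * D ^ (1 / p)) * L := by
  have hsplit : D ^ ((p * α + 1) / p) = D ^ α * D ^ (1 / p) := by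
    rw [← Real.rpow_add hD]
    congr 1
    field_simp
  have hMD : M * D ^ α ≤ L / (p * α * D ^ (1 / p)) := by
    rw [le_div_iff₀ (by positivity)]
    rw [hsplit] at h
    linarith
  calc L * D ^ (-(1 / p)) + M * D ^ α ≤ L * D ^ (-(1 / p)) + L / (p * α * D ^ (1 / p)) := by
        gcongr
    _ = _ := by
        rw [Real.rpow_neg hD.le]
        field_simp

theorem le_of_forall_le_mul_rpow_neg_add_mul_rpow {A : ℝ} (hp : 0 < p) (hα : 0 < α)
    (hD : 0 < D) (hL : 0 ≤ L) (hM : 0 ≤ M)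
    (h : ∀ r, 0 < r → r ≤ D → A ≤ L * r ^ (-(1 / p)) + M * r ^ α) :
    A ≤ (p * α + 1) / (p * α) ^ (p * α / (p * α + 1)) * M ^ (1 / (p * α + 1))
          * L ^ (p * α / (p * α + 1))
        + (p * α + 1) / (p * α * D ^ (1 / p)) * L := by
  rcases hL.eq_or_lt with rfl | hL
  · have hA : A ≤ 0 :=
      nonpos_of_forall_le_mul_rpow hα hD fun r hr hrD => by simpa using h r hr hrD
    simpa [Real.zero_rpow (by positivity : p * α / (p * α + 1) ≠ 0)] using hA
  by_cases hcase : L < p * α * M * D ^ ((p * α + 1) / p)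
  · have hM : 0 < M := hM.lt_of_ne (by rintro rfl; simp at hcase; linarith)
    have hopt := h _ (optimalRadius_pos hL hM hp hα) (optimalRadius_le hp hα hD hL hM hcase)
    rw [mul_rpow_neg_add_mul_rpow_optimalRadius hp hα hL hM] at hopt
    have : 0 ≤ (p * α + 1) / (p * α * D ^ (1 / p)) * L := by positivity
    linarith
  · have hend := mul_rpow_neg_add_mul_rpow_le_of_le hp hα hD (not_lt.1 hcase)
    have : 0 ≤ (p * α + 1) / (p * α) ^ (p * α / (p * α + 1)) * M ^ (1 / (p * α + 1))
        * L ^ (p * α / (p * α + 1)) := by positivity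
    linarith [h D hD le_rfl]

end Optimisation

theorem stmt7_general (a b : ℝ) (hab : a < b) (α p : ℝ) (hα0 : 0 < α) (hp : 1 ≤ p)
    (φ : ℝ → ℝ) (hφ : ContinuousOn φ (Set.Icc a b))
    (hbdd : BddAbove {r : ℝ | ∃ x ∈ Set.Icc a b, ∃ y ∈ Set.Icc a b,
        x ≠ y ∧ r = |φ x - φ y| / |x - y| ^ α}) :
    ∀ x ∈ Set.Icc a b,
      |φ x| ≤ (p * α + 1) / (p * α) ^ (p * α / (p * α + 1))
          * (sSup {r : ℝ | ∃ x ∈ Set.Icc a b, ∃ y ∈ Set.Icc a b,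
              x ≠ y ∧ r = |φ x - φ y| / |x - y| ^ α}) ^ (1 / (p * α + 1))
          * ((∫ y in a..b, |φ y| ^ p) ^ (1 / p)) ^ (p * α / (p * α + 1))
        + (p * α + 1) / (p * α * (b - a) ^ (1 / p)) * (∫ y in a..b, |φ y| ^ p) ^ (1 / p) := by
  intro x hx
  have hp0 : 0 < p := by linarith
  have hM : 0 ≤ sSup (holderQuotients (Icc a b) α φ) := sSup_holderQuotients_nonneg
  have hX : 0 ≤ ∫ y in a..b, |φ y| ^ p :=
    intervalIntegral.integral_nonneg hab.le fun _ _ => by positivity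
  refine le_of_forall_le_mul_rpow_neg_add_mul_rpow hp0 hα0 (sub_pos.2 hab)
    (Real.rpow_nonneg hX _) hM fun r hr hrD => ?_
  exact abs_le_integral_rpow_mul_rpow_neg_add_mul_rpow hφ hp0 hα0.le hM
    (fun u hu v hv => abs_sub_le_sSup_holderQuotients_mul hα0 hbdd hu hv) hx hr hrD

theorem stmt7 (a b : ℝ) (hab : a < b) (α p : ℝ) (hα0 : 0 < α) (hα1 : α < 1) (hp : 1 ≤ p)
    (φ : ℝ → ℝ) (hφ : ContinuousOn φ (Set.Icc a b))
    (hbdd : BddAbove {r : ℝ | ∃ x ∈ Set.Icc a b, ∃ y ∈ Set.Icc a b,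
        x ≠ y ∧ r = |φ x - φ y| / |x - y| ^ α}) :
    ∀ x ∈ Set.Icc a b,
      |φ x| ≤ (p * α + 1) / (p * α) ^ (p * α / (p * α + 1))
          * (sSup {r : ℝ | ∃ x ∈ Set.Icc a b, ∃ y ∈ Set.Icc a b,
              x ≠ y ∧ r = |φ x - φ y| / |x - y| ^ α}) ^ (1 / (p * α + 1))
          * ((∫ y in a..b, |φ y| ^ p) ^ (1 / p)) ^ (p * α / (p * α + 1))
        + (p * α + 1) / (p * α * (b - a) ^ (1 / p)) * (∫ y in a..b, |φ y| ^ p) ^ (1 / p) :=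
  stmt7_general a b hab α p hα0 hp φ hφ hbdd
end

section
/- Let γ₀ > 0 and D > 0, and set η₁ := √((γ₀+D)/D) and η₂ := 1/2. Then inf over η₁' > 0 and η₂' ∈ (0,1) of the expression (2+η₁')/(γ₀+D) + 1/(4·η₁'·η₂'·(1-η₂')·D) equals (2+η₁)/(γ₀+D) + 1/(4·η₁·η₂·(1-η₂)·D) = 2/√(D(γ₀+D)) + 2/(γ₀+D). -/
theorem stmt9 (γ₀ D : ℝ) (hγ : 0 < γ₀) (hD : 0 < D) :
    (∀ η₁' > (0:ℝ), ∀ η₂' ∈ Set.Ioo (0:ℝ) 1,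
      (2 + Real.sqrt ((γ₀ + D) / D)) / (γ₀ + D)
          + 1 / (4 * Real.sqrt ((γ₀ + D) / D) * (1 / 2) * (1 - 1 / 2) * D)
        ≤ (2 + η₁') / (γ₀ + D) + 1 / (4 * η₁' * η₂' * (1 - η₂') * D))
    ∧ (2 + Real.sqrt ((γ₀ + D) / D)) / (γ₀ + D)
          + 1 / (4 * Real.sqrt ((γ₀ + D) / D) * (1 / 2) * (1 - 1 / 2) * D)
        = 2 / Real.sqrt (D * (γ₀ + D)) + 2 / (γ₀ + D) := by
  have hA : (0:ℝ) < γ₀ + D := by linarith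
  set s := Real.sqrt ((γ₀ + D) / D) with hs_def
  have hs : 0 < s := Real.sqrt_pos.mpr (by positivity)
  have hs2 : s ^ 2 = (γ₀ + D) / D := Real.sq_sqrt (by positivity)
  have hs2' : s ^ 2 * D = γ₀ + D := by
    rw [hs2]; field_simp
  constructor
  · intro η₁' hη₁ η₂' hη₂
    obtain ⟨h2a, h2b⟩ := hη₂
    have h4 : 4 * η₂' * (1 - η₂') ≤ 1 := by nlinarith [sq_nonneg (η₂' - 1/2)]
    have hpos : 0 < 4 * η₁' * η₂' * (1 - η₂') * D := by
      have : 0 < 1 - η₂' := by linarith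
      positivity
    have step1 : 1 / (η₁' * D) ≤ 1 / (4 * η₁' * η₂' * (1 - η₂') * D) := by
      apply one_div_le_one_div_of_le hpos
      nlinarith [mul_le_mul_of_nonneg_right h4 (le_of_lt (mul_pos hη₁ hD)), mul_pos hη₁ hD]
    have key : (2 + s) / (γ₀ + D) + 1 / (4 * s * (1/2) * (1 - 1/2) * D)
        ≤ (2 + η₁') / (γ₀ + D) + 1 / (η₁' * D) := by
      have hsd : 4 * s * (1/2) * (1 - 1/2) * D = s * D := by ring
      rw [hsd]
      rw [div_add_div _ _ (ne_of_gt hA) (by positivity),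
          div_add_div _ _ (ne_of_gt hA) (by positivity)]
      rw [div_le_div_iff₀ (by positivity) (by positivity)]
      have expand : ((2 + η₁') * (η₁' * D) + (γ₀ + D) * 1) * ((γ₀ + D) * (s * D))
          - ((2 + s) * (s * D) + (γ₀ + D) * 1) * ((γ₀ + D) * (η₁' * D))
          = (γ₀ + D) * D * (D * s * (η₁' - s) ^ 2) := by
        rw [← hs2']; ring
      nlinarith [mul_nonneg (mul_nonneg (mul_nonneg hA.le hD.le) (mul_nonneg hD.le hs.le)) (sq_nonneg (η₁' - s))]
    linarith
  · have hsd : 4 * s * (1/2) * (1 - 1/2) * D = s * D := by ring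
    have hsD : s * D = Real.sqrt (D * (γ₀ + D)) := by
      have h : D * (γ₀ + D) = ((γ₀ + D) / D) * D ^ 2 := by field_simp
      rw [hs_def, h, Real.sqrt_mul (by positivity), Real.sqrt_sq hD.le]
    rw [hsd, hsD]
    have h1 : (2 + s) / (γ₀ + D) = 2 / (γ₀ + D) + s / (γ₀ + D) := by ring
    have h2 : s / (γ₀ + D) = 1 / Real.sqrt (D * (γ₀ + D)) := by
      rw [← hsD, ← hs2']
      rw [div_eq_div_iff (by positivity) (by positivity)]
      ring
    rw [h1, h2]
    ring
end
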